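/- arXiv:2601.01853 — 3 statements merged into one kernel-verified Lean document; each statement's English description precedes it below -/
import Mathlib

section
/- Define h(x) := √(2L)·(1 + σ₀α₀L/√S₀)·α₀·√x + (1 + σ₀α₀L/√S₀)·Lα₀²/2. Then for AdaGrad-Norm, almost surely ĝ(θ_{n+1}) − ĝ(θ_n) ≤ h(ĝ(θ_n)) for all n ≥ 1; moreover there exists a constant C₀ > 0 such that h(x) < x/2 for all x ≥ C₀. -/
/-!
Since `‖G_n‖² ≤ S_n`, every AdaGrad-Norm step has length at most `α₀`, whatever the stochastic
gradient is, so the bound holds pathwise. Along a step of length at most `α₀` the descent lemma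
bounds the increase of `g` by `α₀‖∇g(θ_n)‖ + Lα₀²/2`, and `L`-smoothness gives
`‖∇g(θ_{n+1})‖ ≤ ‖∇g(θ_n)‖ + Lα₀`; as `S₀ ≤ S_{n-1} ≤ S_n`, the increase of the gradient term of
`ĝ` is then at most `σ₀α₀L/√S₀` times the same quantity. Finally `‖∇g‖² ≤ 2Lg ≤ 2Lĝ` for a
nonnegative `L`-smooth `g`. The second claim holds because `h` grows like `√x`.
-/

open MeasureTheory Filter InnerProductSpace Set

section LipschitzGradient

variable {E : Type*} [NormedAddCommGroup E] [InnerProductSpace ℝ E] [CompleteSpace E]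
  {g : E → ℝ} {L : ℝ}

theorem hasDerivAt_comp_add_smul (hg : Differentiable ℝ g) (x v : E) (t : ℝ) :
    HasDerivAt (fun t : ℝ => g (x + t • v)) ⟪gradient g (x + t • v), v⟫_ℝ t := by
  have hline : HasDerivAt (fun t : ℝ => x + t • v) v t := by
    simpa using ((hasDerivAt_id t).smul_const v).const_add x
  exact (hg _).hasGradientAt.hasFDerivAt.comp_hasDerivAt t hline

theorem descent_lemma (hg : Differentiable ℝ g)
    (hsm : ∀ x y, ‖gradient g x - gradient g y‖ ≤ L * ‖x - y‖) (x y : E) :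
    g y ≤ g x + ⟪gradient g x, y - x⟫_ℝ + L / 2 * ‖y - x‖ ^ 2 := by
  set v := y - x with hv
  let F : ℝ → ℝ := fun t => g (x + t • v) - t * ⟪gradient g x, v⟫_ℝ - L / 2 * t ^ 2 * ‖v‖ ^ 2
  have hF : ∀ t,
      HasDerivAt F (⟪gradient g (x + t • v) - gradient g x, v⟫_ℝ - L * t * ‖v‖ ^ 2) t := by
    intro t
    refine (((hasDerivAt_comp_add_smul hg x v t).sub
      ((hasDerivAt_id t).mul_const ⟪gradient g x, v⟫_ℝ)).sub
      (((hasDerivAt_pow 2 t).const_mul (L / 2)).mul_const (‖v‖ ^ 2))).congr_deriv ?_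
    rw [inner_sub_left]; ring
  have hF' : ∀ t ∈ interior (Ici (0 : ℝ)),
      ⟪gradient g (x + t • v) - gradient g x, v⟫_ℝ - L * t * ‖v‖ ^ 2 ≤ 0 := by
    intro t ht
    rw [interior_Ici] at ht
    refine sub_nonpos.2 ?_
    calc ⟪gradient g (x + t • v) - gradient g x, v⟫_ℝ
        ≤ ‖gradient g (x + t • v) - gradient g x‖ * ‖v‖ := real_inner_le_norm _ _
      _ ≤ L * ‖t • v‖ * ‖v‖ := by
          gcongr
          simpa using hsm (x + t • v) x
      _ = L * t * ‖v‖ ^ 2 := by rw [norm_smul, Real.norm_of_nonneg ht.le]; ring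
  have hanti : AntitoneOn F (Ici 0) :=
    antitoneOn_of_hasDerivWithinAt_nonpos (convex_Ici 0)
      (fun t _ => (hF t).continuousAt.continuousWithinAt) (fun t _ => (hF t).hasDerivWithinAt) hF'
  have h01 := hanti (mem_Ici.2 le_rfl) (mem_Ici.2 zero_le_one) zero_le_one
  simp only [F, zero_smul, add_zero, one_smul, hv, add_sub_cancel] at h01
  linarith

theorem sq_norm_gradient_le (hg : Differentiable ℝ g) (hL : 0 < L) (hnn : ∀ x, 0 ≤ g x)
    (hsm : ∀ x y, ‖gradient g x - gradient g y‖ ≤ L * ‖x - y‖) (x : E) :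
    ‖gradient g x‖ ^ 2 ≤ 2 * L * g x := by
  have h := descent_lemma hg hsm x (x - L⁻¹ • gradient g x)
  rw [sub_sub_cancel_left, inner_neg_right, real_inner_smul_right, real_inner_self_eq_norm_sq,
    norm_neg, norm_smul, Real.norm_of_nonneg (inv_nonneg.2 hL.le)] at h
  have hstep := hnn (x - L⁻¹ • gradient g x)
  have hgain : L⁻¹ * ‖gradient g x‖ ^ 2 - L / 2 * (L⁻¹ * ‖gradient g x‖) ^ 2
      = ‖gradient g x‖ ^ 2 / (2 * L) := by
    field_simp; ring
  rw [← div_le_iff₀' (by positivity)]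
  linarith

theorem le_add_norm_gradient_mul_of_norm_sub_le (hg : Differentiable ℝ g) (hL : 0 ≤ L)
    (hsm : ∀ x y, ‖gradient g x - gradient g y‖ ≤ L * ‖x - y‖) {x y : E} {r : ℝ}
    (hxy : ‖y - x‖ ≤ r) :
    g y ≤ g x + ‖gradient g x‖ * r + L / 2 * r ^ 2 := by
  calc g y ≤ g x + ⟪gradient g x, y - x⟫_ℝ + L / 2 * ‖y - x‖ ^ 2 := descent_lemma hg hsm x y
    _ ≤ g x + ‖gradient g x‖ * ‖y - x‖ + L / 2 * ‖y - x‖ ^ 2 := by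
        gcongr; exact real_inner_le_norm _ _
    _ ≤ g x + ‖gradient g x‖ * r + L / 2 * r ^ 2 := by gcongr

theorem norm_gradient_le_of_norm_sub_le (hL : 0 ≤ L)
    (hsm : ∀ x y, ‖gradient g x - gradient g y‖ ≤ L * ‖x - y‖) {x y : E} {r : ℝ}
    (hxy : ‖y - x‖ ≤ r) :
    ‖gradient g y‖ ≤ ‖gradient g x‖ + L * r :=
  calc ‖gradient g y‖ ≤ ‖gradient g x‖ + ‖gradient g y - gradient g x‖ :=
        norm_le_norm_add_norm_sub' _ _
    _ ≤ ‖gradient g x‖ + L * r := by grw [hsm y x, hxy]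

end LipschitzGradient

theorem norm_div_sqrt_add_sq_norm_smul_le {E : Type*} [NormedAddCommGroup E] [NormedSpace ℝ E]
    {s α : ℝ} (hs : 0 ≤ s) (hα : 0 ≤ α) (v : E) :
    ‖(α / Real.sqrt (s + ‖v‖ ^ 2)) • v‖ ≤ α := by
  rw [norm_smul, Real.norm_of_nonneg (by positivity), div_mul_eq_mul_div, mul_div_assoc]
  refine mul_le_of_le_one_right hα (div_le_one_of_le₀ ?_ (Real.sqrt_nonneg _))
  exact Real.le_sqrt_of_sq_le (le_add_of_nonneg_left hs)

section AdaGradNorm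

variable {E : Type*} [NormedAddCommGroup E] [InnerProductSpace ℝ E] [CompleteSpace E]

/-- The Lyapunov function `ĝ`: `ĝ(θ_n)` is `adagradLyapunov g σ₀ α₀ (S (n - 1)) (θ n)`. -/
noncomputable def adagradLyapunov (g : E → ℝ) (σ α s : ℝ) (x : E) : ℝ :=
  g x + σ * α / 2 * (‖gradient g x‖ ^ 2 / Real.sqrt s)

variable {g : E → ℝ} {L σ α S₀ s s' : ℝ} {x y : E}

theorem adagradLyapunov_sub_le (hg : Differentiable ℝ g) (hL : 0 ≤ L)
    (hsm : ∀ x y, ‖gradient g x - gradient g y‖ ≤ L * ‖x - y‖) (hσ : 0 ≤ σ) (hα : 0 ≤ α)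
    (hS₀ : 0 < S₀) (hs : S₀ ≤ s) (hss' : s ≤ s') (hxy : ‖y - x‖ ≤ α) :
    adagradLyapunov g σ α s' y - adagradLyapunov g σ α s x
      ≤ (1 + σ * α * L / Real.sqrt S₀) * (α * ‖gradient g x‖ + L * α ^ 2 / 2) := by
  set A := ‖gradient g x‖
  have hgy := le_add_norm_gradient_mul_of_norm_sub_le hg hL hsm hxy
  have hgrad := norm_gradient_le_of_norm_sub_le hL hsm hxy
  have hdiv : ‖gradient g y‖ ^ 2 / Real.sqrt s'
      ≤ A ^ 2 / Real.sqrt s + (2 * A * (L * α) + (L * α) ^ 2) / Real.sqrt S₀ :=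
    calc ‖gradient g y‖ ^ 2 / Real.sqrt s' ≤ (A + L * α) ^ 2 / Real.sqrt s := by
          gcongr
          exact Real.sqrt_pos.2 (hS₀.trans_le hs)
      _ = A ^ 2 / Real.sqrt s + (2 * A * (L * α) + (L * α) ^ 2) / Real.sqrt s := by ring
      _ ≤ A ^ 2 / Real.sqrt s + (2 * A * (L * α) + (L * α) ^ 2) / Real.sqrt S₀ := by
          gcongr
  have hc : 0 ≤ σ * α / 2 := by positivity
  have hS₀' : Real.sqrt S₀ ≠ 0 := (Real.sqrt_pos.2 hS₀).ne'
  calc adagradLyapunov g σ α s' y - adagradLyapunov g σ α s x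
      ≤ A * α + L / 2 * α ^ 2 + σ * α / 2 * ((2 * A * (L * α) + (L * α) ^ 2) / Real.sqrt S₀) := by
        unfold adagradLyapunov
        linarith [mul_le_mul_of_nonneg_left hdiv hc]
    _ = (1 + σ * α * L / Real.sqrt S₀) * (α * A + L * α ^ 2 / 2) := by
        field_simp

theorem norm_gradient_le_sqrt_adagradLyapunov (hg : Differentiable ℝ g) (hL : 0 < L)
    (hnn : ∀ x, 0 ≤ g x) (hsm : ∀ x y, ‖gradient g x - gradient g y‖ ≤ L * ‖x - y‖)
    (hσ : 0 ≤ σ) (hα : 0 ≤ α) (s : ℝ) (x : E) :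
    ‖gradient g x‖ ≤ Real.sqrt (2 * L) * Real.sqrt (adagradLyapunov g σ α s x) := by
  rw [← Real.sqrt_mul (by positivity)]
  refine Real.le_sqrt_of_sq_le ((sq_norm_gradient_le hg hL hnn hsm x).trans ?_)
  unfold adagradLyapunov
  gcongr
  exact le_add_of_nonneg_right (by positivity)

theorem adagradLyapunov_sub_le_sqrt (hg : Differentiable ℝ g) (hL : 0 < L)
    (hnn : ∀ x, 0 ≤ g x) (hsm : ∀ x y, ‖gradient g x - gradient g y‖ ≤ L * ‖x - y‖)
    (hσ : 0 ≤ σ) (hα : 0 ≤ α) (hS₀ : 0 < S₀) (hs : S₀ ≤ s) (hss' : s ≤ s')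
    (hxy : ‖y - x‖ ≤ α) :
    adagradLyapunov g σ α s' y - adagradLyapunov g σ α s x
      ≤ Real.sqrt (2 * L) * (1 + σ * α * L / Real.sqrt S₀) * α
          * Real.sqrt (adagradLyapunov g σ α s x)
        + (1 + σ * α * L / Real.sqrt S₀) * (L * α ^ 2 / 2) := by
  set K := 1 + σ * α * L / Real.sqrt S₀
  have hK : 0 ≤ K := by positivity
  calc adagradLyapunov g σ α s' y - adagradLyapunov g σ α s x
      ≤ K * (α * ‖gradient g x‖ + L * α ^ 2 / 2) :=
        adagradLyapunov_sub_le hg hL.le hsm hσ hα hS₀ hs hss' hxy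
    _ = K * α * ‖gradient g x‖ + K * (L * α ^ 2 / 2) := by ring
    _ ≤ K * α * (Real.sqrt (2 * L) * Real.sqrt (adagradLyapunov g σ α s x))
          + K * (L * α ^ 2 / 2) := by
        grw [norm_gradient_le_sqrt_adagradLyapunov hg hL hnn hsm hσ hα s x]
    _ = _ := by ring

end AdaGradNorm

theorem exists_forall_ge_mul_sqrt_add_lt_half (a b : ℝ) :
    ∃ C₀ : ℝ, 0 < C₀ ∧ ∀ x : ℝ, C₀ ≤ x → a * Real.sqrt x + b < x / 2 := by
  refine ⟨max (16 * a ^ 2) (4 * |b| + 1), by positivity, fun x hx => ?_⟩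
  have hx₀ : 0 ≤ x := le_trans (by positivity) hx
  have ha : 4 * |a| ≤ Real.sqrt x := by
    refine Real.le_sqrt_of_sq_le ?_
    rw [mul_pow, sq_abs]
    linarith [le_max_left (16 * a ^ 2) (4 * |b| + 1)]
  have hsq := Real.mul_self_sqrt hx₀
  nlinarith [le_abs_self a, le_abs_self b, le_max_right (16 * a ^ 2) (4 * |b| + 1),
    Real.sqrt_nonneg x, mul_le_mul_of_nonneg_right ha (Real.sqrt_nonneg x)]

theorem adagrad_norm_adjacent_lyapunov_bound_general
    {d : ℕ} {Ω : Type*} {m0 : MeasurableSpace Ω} (P : Measure Ω)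
    (g : EuclideanSpace ℝ (Fin d) → ℝ)
    (L σ₀ α₀ S₀ : ℝ)
    (hL : 0 < L) (hσ₀ : 0 ≤ σ₀) (hα₀ : 0 < α₀) (hS₀ : 0 < S₀)
    (hg_diff : ContDiff ℝ 1 g)
    (hg_nonneg : ∀ x, 0 ≤ g x)
    (hg_smooth : ∀ x y, ‖gradient g x - gradient g y‖ ≤ L * ‖x - y‖)
    (G θ : ℕ → Ω → EuclideanSpace ℝ (Fin d))
    (S : ℕ → Ω → ℝ)
    (hS_init : ∀ ω, S 0 ω = S₀)
    (hS_rec : ∀ n, 1 ≤ n → ∀ ω, S n ω = S (n - 1) ω + ‖G n ω‖ ^ 2)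
    (hθ_rec : ∀ n, 1 ≤ n → ∀ ω,
      θ (n + 1) ω = θ n ω - (α₀ / Real.sqrt (S n ω)) • G n ω) :
    (∀ᵐ ω ∂P, ∀ n, 1 ≤ n →
        (g (θ (n + 1) ω)
            + σ₀ * α₀ / 2 * (‖gradient g (θ (n + 1) ω)‖ ^ 2 / Real.sqrt (S n ω)))
          - (g (θ n ω)
            + σ₀ * α₀ / 2 * (‖gradient g (θ n ω)‖ ^ 2 / Real.sqrt (S (n - 1) ω)))
        ≤ Real.sqrt (2 * L) * (1 + σ₀ * α₀ * L / Real.sqrt S₀) * α₀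
              * Real.sqrt (g (θ n ω)
                  + σ₀ * α₀ / 2 * (‖gradient g (θ n ω)‖ ^ 2 / Real.sqrt (S (n - 1) ω)))
            + (1 + σ₀ * α₀ * L / Real.sqrt S₀) * (L * α₀ ^ 2 / 2)) ∧
    (∃ C₀ : ℝ, 0 < C₀ ∧ ∀ x : ℝ, C₀ ≤ x →
        Real.sqrt (2 * L) * (1 + σ₀ * α₀ * L / Real.sqrt S₀) * α₀ * Real.sqrt x
            + (1 + σ₀ * α₀ * L / Real.sqrt S₀) * (L * α₀ ^ 2 / 2)
          < x / 2) := by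
  refine ⟨ae_of_all P fun ω n hn => ?_, exists_forall_ge_mul_sqrt_add_lt_half _ _⟩
  have hS_mono : Monotone (S · ω) := monotone_nat_of_le_succ fun k => by
    rw [hS_rec (k + 1) k.succ_pos ω, Nat.add_sub_cancel]
    exact le_add_of_nonneg_right (sq_nonneg _)
  have hS₀_le : S₀ ≤ S (n - 1) ω := hS_init ω ▸ hS_mono (Nat.zero_le _)
  have hstep : ‖θ (n + 1) ω - θ n ω‖ ≤ α₀ := by
    rw [hθ_rec n hn ω, sub_sub_cancel_left, norm_neg, hS_rec n hn ω]
    exact norm_div_sqrt_add_sq_norm_smul_le (hS₀.le.trans hS₀_le) hα₀.le _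
  exact adagradLyapunov_sub_le_sqrt (hg_diff.differentiable one_ne_zero) hL hg_nonneg hg_smooth
    hσ₀ hα₀.le hS₀ hS₀_le (hS_mono (n.sub_le 1)) hstep

/-- Lemma 3.5: with `h(x) = √(2L)(1 + σ₀α₀L/√S₀)α₀√x + (1 + σ₀α₀L/√S₀)Lα₀²/2`,
almost surely `ĝ(θ_{n+1}) - ĝ(θ_n) ≤ h(ĝ(θ_n))` for all `n ≥ 1`, and there exists
`C₀ > 0` with `h(x) < x/2` for all `x ≥ C₀`. -/
theorem adagrad_norm_adjacent_lyapunov_bound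
    {d : ℕ} {Ω : Type*} {m0 : MeasurableSpace Ω} (P : Measure Ω) [IsProbabilityMeasure P]
    (ℱ : Filtration ℕ m0)
    (g : EuclideanSpace ℝ (Fin d) → ℝ)
    (L σ₀ α₀ S₀ : ℝ)
    (hL : 0 < L) (hσ₀ : 0 ≤ σ₀) (hα₀ : 0 < α₀) (hS₀ : 0 < S₀)
    (hg_diff : ContDiff ℝ 1 g)
    (hg_nonneg : ∀ x, 0 ≤ g x)
    (hg_smooth : ∀ x y, ‖gradient g x - gradient g y‖ ≤ L * ‖x - y‖)
    (θ₁ : EuclideanSpace ℝ (Fin d))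
    (G θ : ℕ → Ω → EuclideanSpace ℝ (Fin d))
    (S : ℕ → Ω → ℝ)
    (hG_meas : ∀ n, 1 ≤ n → StronglyMeasurable[ℱ n] (G n))
    (hθ_init : ∀ ω, θ 1 ω = θ₁)
    (hS_init : ∀ ω, S 0 ω = S₀)
    (hS_rec : ∀ n, 1 ≤ n → ∀ ω, S n ω = S (n - 1) ω + ‖G n ω‖ ^ 2)
    (hθ_rec : ∀ n, 1 ≤ n → ∀ ω,
      θ (n + 1) ω = θ n ω - (α₀ / Real.sqrt (S n ω)) • G n ω) :
    (∀ᵐ ω ∂P, ∀ n, 1 ≤ n →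
        (g (θ (n + 1) ω)
            + σ₀ * α₀ / 2 * (‖gradient g (θ (n + 1) ω)‖ ^ 2 / Real.sqrt (S n ω)))
          - (g (θ n ω)
            + σ₀ * α₀ / 2 * (‖gradient g (θ n ω)‖ ^ 2 / Real.sqrt (S (n - 1) ω)))
        ≤ Real.sqrt (2 * L) * (1 + σ₀ * α₀ * L / Real.sqrt S₀) * α₀
              * Real.sqrt (g (θ n ω)
                  + σ₀ * α₀ / 2 * (‖gradient g (θ n ω)‖ ^ 2 / Real.sqrt (S (n - 1) ω)))
            + (1 + σ₀ * α₀ * L / Real.sqrt S₀) * (L * α₀ ^ 2 / 2)) ∧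
    (∃ C₀ : ℝ, 0 < C₀ ∧ ∀ x : ℝ, C₀ ≤ x →
        Real.sqrt (2 * L) * (1 + σ₀ * α₀ * L / Real.sqrt S₀) * α₀ * Real.sqrt x
            + (1 + σ₀ * α₀ * L / Real.sqrt S₀) * (L * α₀ ^ 2 / 2)
          < x / 2) :=
  adagrad_norm_adjacent_lyapunov_bound_general (m0 := m0) P g L σ₀ α₀ S₀ hL hσ₀ hα₀ hS₀ hg_diff
    hg_nonneg hg_smooth G θ S hS_init hS_rec hθ_rec
end

section
/- Divergence of the AdaGrad-Norm step-size series: almost surely, ∑_{n=1}^∞ α₀/√S_n = +∞. -/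
/-!
Fix `M` and let `Aₙ = {∑_{k ≤ n} 1/√S_k ≤ M}`, an `ℱₙ`-event. Along a trajectory, `L`-smoothness
and Cauchy–Schwarz give `‖∇g(θ_{n+1})‖² ≤ 2‖∇g(θ₁)‖² + 4L²α₀² (∑_{k ≤ n} 1/√S_k) √Sₙ`, so on `Aₙ`
the affine-variance bound makes `E[‖G_{n+1}‖² | ℱₙ]` at most affine in `√Sₙ`. Concavity of the
square root, `√S_{n+1} ≤ √Sₙ + ‖G_{n+1}‖² / (2√Sₙ)`, then shows that `∫_{Aₙ} √Sₙ` grows at most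
linearly in `n`.

On the other hand, on `B = ⋂ Aₙ` the series `∑ 1/√S_k` converges, so for every `ε > 0` there is
an `N` and a part of `B` carrying half its measure on which the tail of the series beyond `N` is
at most `ε`; since `√S` is nondecreasing this forces `√Sₙ ≥ (n - N)/ε` there. Hence `∫_B √Sₙ`
grows with slope at least `P(B)/(2ε)`, which contradicts the linear bound for small `ε` unless
`P(B) = 0`.
-/

open MeasureTheory Filter Topology Finset

lemma Real.sqrt_le_sqrt_add_sub_div {a y : ℝ} (ha : 0 < a) (hy : 0 ≤ y) :
    √y ≤ √a + (y - a) / (2 * √a) := by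
  have hsa : 0 < √a := Real.sqrt_pos.mpr ha
  rw [← sub_nonneg, show √a + (y - a) / (2 * √a) - √y = (√y - √a) ^ 2 / (2 * √a) by
    field_simp
    linear_combination Real.sq_sqrt ha.le - Real.sq_sqrt hy]
  positivity

lemma sum_sub_div_sqrt_le {s : ℕ → ℝ} (hs : ∀ n, 0 < s n) (n : ℕ) :
    ∑ k ∈ range n, (s (k + 1) - s k) / √(s (k + 1)) ≤ 2 * √(s n) := by
  have hstep (k : ℕ) : (s (k + 1) - s k) / √(s (k + 1)) ≤ 2 * (√(s (k + 1)) - √(s k)) := by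
    have hconcave := Real.sqrt_le_sqrt_add_sub_div (hs (k + 1)) (hs k).le
    have hrw : (s (k + 1) - s k) / √(s (k + 1))
        = -2 * ((s k - s (k + 1)) / (2 * √(s (k + 1)))) := by ring
    linarith
  calc ∑ k ∈ range n, (s (k + 1) - s k) / √(s (k + 1))
      ≤ ∑ k ∈ range n, 2 * (√(s (k + 1)) - √(s k)) := sum_le_sum fun k _ => hstep k
    _ = 2 * (√(s n) - √(s 0)) := by rw [← mul_sum, sum_range_sub (fun k => √(s k))]
    _ ≤ 2 * √(s n) := by linarith [Real.sqrt_nonneg (s 0)]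

noncomputable def partialSumInv (r : ℕ → ℝ) (n : ℕ) : ℝ := ∑ k ∈ range n, (r (k + 1))⁻¹

lemma partialSumInv_mono {r : ℕ → ℝ} (hr : ∀ n, 0 ≤ r n) : Monotone (partialSumInv r) :=
  monotone_nat_of_le_succ fun n => by
    simpa [partialSumInv, sum_range_succ] using inv_nonneg.mpr (hr (n + 1))

lemma sub_le_partialSumInv_sub_mul {r : ℕ → ℝ} (hr_pos : ∀ n, 0 < r n) (hr : Monotone r)
    {N n : ℕ} (hNn : N ≤ n) : (n - N : ℝ) ≤ (partialSumInv r n - partialSumInv r N) * r n := by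
  have hterm : ∀ k ∈ Ico N n, (r n)⁻¹ ≤ (r (k + 1))⁻¹ := fun k hk =>
    inv_anti₀ (hr_pos _) (hr (mem_Ico.mp hk).2)
  have := card_nsmul_le_sum _ _ _ hterm
  rw [Nat.card_Ico, nsmul_eq_mul, Nat.cast_sub hNn, sum_Ico_eq_sub _ hNn] at this
  rwa [← div_le_iff₀ (hr_pos n), div_eq_mul_inv]

lemma sq_sum_div_sqrt_le {S a : ℕ → ℝ} (hS_pos : ∀ n, 0 < S n)
    (hS : ∀ n, S (n + 1) = S n + a (n + 1) ^ 2) (n : ℕ) :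
    (∑ k ∈ range n, a (k + 1) / √(S (k + 1))) ^ 2
      ≤ partialSumInv (fun k => √(S k)) n * (2 * √(S n)) := by
  have hincr (k : ℕ) : S (k + 1) - S k = a (k + 1) ^ 2 := by rw [hS k]; ring
  calc (∑ k ∈ range n, a (k + 1) / √(S (k + 1))) ^ 2
      ≤ partialSumInv (fun k => √(S k)) n *
          ∑ k ∈ range n, (S (k + 1) - S k) / √(S (k + 1)) :=
        sum_sq_le_sum_mul_sum_of_sq_le_mul _ (fun k _ => by positivity)
          (fun k _ => by rw [hincr]; positivity) fun k _ => le_of_eq (by rw [hincr]; ring)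
    _ ≤ partialSumInv (fun k => √(S k)) n * (2 * √(S n)) :=
        mul_le_mul_of_nonneg_left (sum_sub_div_sqrt_le hS_pos n)
          (sum_nonneg fun k _ => by positivity)

lemma norm_le_add_mul_sum_norm_sub {E F : Type*} [SeminormedAddCommGroup E]
    [SeminormedAddCommGroup F] {f : E → F} {L : ℝ} (hf : ∀ x y, ‖f x - f y‖ ≤ L * ‖x - y‖)
    (x : ℕ → E) (n : ℕ) :
    ‖f (x n)‖ ≤ ‖f (x 0)‖ + L * ∑ k ∈ range n, ‖x (k + 1) - x k‖ := by
  induction n with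
  | zero => simp
  | succ n ih =>
    have := norm_le_norm_add_norm_sub' (f (x (n + 1))) (f (x n))
    have := hf (x (n + 1)) (x n)
    rw [sum_range_succ, mul_add]
    linarith

lemma adagrad_norm_sq_le {E F : Type*} [SeminormedAddCommGroup E] [NormedSpace ℝ E]
    [SeminormedAddCommGroup F] {f : E → F} {L α₀ : ℝ} (hf : ∀ x y, ‖f x - f y‖ ≤ L * ‖x - y‖)
    (hα₀ : 0 ≤ α₀) {S : ℕ → ℝ} {G θ : ℕ → E} (hS_pos : ∀ n, 0 < S n)
    (hS : ∀ n, S (n + 1) = S n + ‖G (n + 1)‖ ^ 2)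
    (hθ : ∀ n, θ (n + 2) = θ (n + 1) - (α₀ / √(S (n + 1))) • G (n + 1)) (n : ℕ) :
    ‖f (θ (n + 1))‖ ^ 2
      ≤ 2 * ‖f (θ 1)‖ ^ 2 + 4 * L ^ 2 * α₀ ^ 2 * partialSumInv (fun k => √(S k)) n * √(S n) := by
  set x := ∑ k ∈ range n, ‖G (k + 1)‖ / √(S (k + 1))
  have hstep (k : ℕ) : ‖θ (k + 2) - θ (k + 1)‖ = α₀ * (‖G (k + 1)‖ / √(S (k + 1))) := by
    rw [hθ, sub_sub_cancel_left, norm_neg, norm_smul, Real.norm_of_nonneg (by positivity)]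
    ring
  have hlip : ‖f (θ (n + 1))‖ ≤ ‖f (θ 1)‖ + L * α₀ * x := by
    simpa only [hstep, ← mul_sum, mul_assoc] using
      norm_le_add_mul_sum_norm_sub hf (fun k => θ (k + 1)) n
  have hcs : x ^ 2 ≤ partialSumInv (fun k => √(S k)) n * (2 * √(S n)) :=
    sq_sum_div_sqrt_le (a := fun k => ‖G k‖) hS_pos hS n
  calc ‖f (θ (n + 1))‖ ^ 2 ≤ (‖f (θ 1)‖ + L * α₀ * x) ^ 2 := by gcongr
    _ ≤ 2 * ‖f (θ 1)‖ ^ 2 + 2 * (L * α₀) ^ 2 * x ^ 2 := by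
      nlinarith [sq_nonneg (‖f (θ 1)‖ - L * α₀ * x)]
    _ ≤ _ := by nlinarith [sq_nonneg (L * α₀)]

section Measure

variable {Ω : Type*} {m0 : MeasurableSpace Ω} {μ : Measure Ω}

lemma MeasureTheory.Integrable.sqrt [IsFiniteMeasure μ] {f : Ω → ℝ} (hf : Integrable f μ) :
    Integrable (fun ω => √(f ω)) μ := by
  refine ((integrable_const 1).add (hf.abs.div_const 2)).mono'
    hf.aemeasurable.sqrt.aestronglyMeasurable (ae_of_all _ fun ω => ?_)
  rw [Real.norm_of_nonneg (Real.sqrt_nonneg _)]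
  calc √(f ω) ≤ √(1 + |f ω|) := Real.sqrt_le_sqrt (by linarith [le_abs_self (f ω)])
    _ ≤ 1 + |f ω| / 2 := Real.sqrt_one_add_le (by linarith [abs_nonneg (f ω)])

lemma setIntegral_mul_le_of_condExp_le [IsFiniteMeasure μ] {m : MeasurableSpace Ω} (hm : m ≤ m0)
    {A : Set Ω} (hA : MeasurableSet[m] A) {f X : Ω → ℝ} (hf : StronglyMeasurable[m] f)
    (hfX : Integrable (f * X) μ) (hX : Integrable X μ) {c : ℝ}
    (hc : ∀ᵐ ω ∂μ, ω ∈ A → f ω * μ[X | m] ω ≤ c) :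
    ∫ ω in A, f ω * X ω ∂μ ≤ c * μ.real A := by
  have hpull : μ[f * X | m] =ᵐ[μ] f * μ[X | m] := condExp_mul_of_stronglyMeasurable_left hf hfX hX
  calc ∫ ω in A, f ω * X ω ∂μ = ∫ ω in A, μ[f * X | m] ω ∂μ :=
        (setIntegral_condExp hm hfX hA).symm
    _ = ∫ ω in A, f ω * μ[X | m] ω ∂μ :=
        setIntegral_congr_ae (hm A hA) (hpull.mono fun ω h _ => h)
    _ ≤ ∫ _ in A, c ∂μ :=
        setIntegral_mono_on_ae (integrable_condExp.congr hpull).integrableOn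
          (integrable_const c).integrableOn (hm A hA) hc
    _ = c * μ.real A := by rw [setIntegral_const, smul_eq_mul, mul_comm]

lemma setIntegral_sqrt_le_add_of_condExp_sub_le [IsFiniteMeasure μ] {m : MeasurableSpace Ω}
    (hm : m ≤ m0) {Y Z : Ω → ℝ} (hY_meas : Measurable[m] Y) (hY_int : Integrable Y μ)
    (hZ_int : Integrable Z μ) {s₀ : ℝ} (hs₀ : 0 < s₀) (hY_ge : ∀ ω, s₀ ≤ Y ω)
    (hZ_nonneg : ∀ ω, 0 ≤ Z ω) {A : Set Ω} (hA : MeasurableSet[m] A) {a b : ℝ} (ha : 0 ≤ a)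
    (hcond : ∀ᵐ ω ∂μ, ω ∈ A → μ[Z - Y | m] ω ≤ a + b * √(Y ω)) :
    ∫ ω in A, √(Z ω) ∂μ ≤ ∫ ω in A, √(Y ω) ∂μ + (a / (2 * √s₀) + b / 2) * μ.real A := by
  have hs₀' : 0 < √s₀ := Real.sqrt_pos.mpr hs₀
  have hY_pos (ω : Ω) : 0 < Y ω := hs₀.trans_le (hY_ge ω)
  set f : Ω → ℝ := fun ω => (2 * √(Y ω))⁻¹
  have hf_meas : StronglyMeasurable[m] f :=
    (measurable_const.mul hY_meas.sqrt).inv.stronglyMeasurable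
  have hf_bdd (ω : Ω) : ‖f ω‖ ≤ (2 * √s₀)⁻¹ := by
    have := Real.sqrt_le_sqrt (hY_ge ω)
    rw [Real.norm_of_nonneg (by positivity)]
    exact inv_anti₀ (by positivity) (by linarith)
  have hfX_int : Integrable (f * (Z - Y)) μ :=
    (hZ_int.sub hY_int).bdd_mul (hf_meas.mono hm).aestronglyMeasurable (ae_of_all _ hf_bdd)
  have hincr : ∫ ω in A, f ω * (Z ω - Y ω) ∂μ ≤ (a / (2 * √s₀) + b / 2) * μ.real A := by
    refine setIntegral_mul_le_of_condExp_le hm hA hf_meas hfX_int (hZ_int.sub hY_int) ?_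
    filter_upwards [hcond] with ω hω hωA
    have := Real.sqrt_le_sqrt (hY_ge ω)
    have := hY_pos ω
    calc f ω * μ[Z - Y | m] ω ≤ (2 * √(Y ω))⁻¹ * (a + b * √(Y ω)) :=
          mul_le_mul_of_nonneg_left (hω hωA) (by positivity)
      _ = a / (2 * √(Y ω)) + b / 2 := by field_simp
      _ ≤ a / (2 * √s₀) + b / 2 := by gcongr
  calc ∫ ω in A, √(Z ω) ∂μ ≤ ∫ ω in A, (√(Y ω) + f ω * (Z ω - Y ω)) ∂μ := by
        refine setIntegral_mono hZ_int.sqrt.integrableOn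
          (hY_int.sqrt.add hfX_int).integrableOn fun ω => ?_
        have := Real.sqrt_le_sqrt_add_sub_div (hY_pos ω) (hZ_nonneg ω)
        rwa [div_eq_inv_mul] at this
    _ = ∫ ω in A, √(Y ω) ∂μ + ∫ ω in A, f ω * (Z ω - Y ω) ∂μ :=
        integral_add hY_int.sqrt.integrableOn hfX_int.integrableOn
    _ ≤ _ := by linarith

lemma setIntegral_sqrt_le_of_condExp_sub_le [IsFiniteMeasure μ] {ℱ : Filtration ℕ m0}
    {S : ℕ → Ω → ℝ} (hS_adapted : Adapted ℱ S) (hS_int : ∀ n, Integrable (S n) μ) {s₀ : ℝ}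
    (hs₀ : 0 < s₀) (hS_ge : ∀ n ω, s₀ ≤ S n ω) {A : ℕ → Set Ω}
    (hA_meas : ∀ n, MeasurableSet[ℱ n] (A n)) (hA_anti : Antitone A) {a b : ℝ} (ha : 0 ≤ a)
    (hb : 0 ≤ b)
    (hcond : ∀ n, ∀ᵐ ω ∂μ, ω ∈ A n → μ[S (n + 1) - S n | ℱ n] ω ≤ a + b * √(S n ω)) (n : ℕ) :
    ∫ ω in A n, √(S n ω) ∂μ
      ≤ ∫ ω in A 0, √(S 0 ω) ∂μ + n * ((a / (2 * √s₀) + b / 2) * μ.real Set.univ) := by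
  induction n with
  | zero => simp
  | succ n ih =>
    have hshrink : ∫ ω in A (n + 1), √(S (n + 1) ω) ∂μ ≤ ∫ ω in A n, √(S (n + 1) ω) ∂μ :=
      setIntegral_mono_set (hS_int (n + 1)).sqrt.integrableOn
        (ae_of_all _ fun ω => Real.sqrt_nonneg _) (hA_anti n.le_succ).eventuallyLE
    have hstep := setIntegral_sqrt_le_add_of_condExp_sub_le (ℱ.le n) (hS_adapted n) (hS_int n)
      (hS_int (n + 1)) hs₀ (hS_ge n) (fun ω => hs₀.le.trans (hS_ge (n + 1) ω)) (hA_meas n) ha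
      (hcond n)
    have hA_le : (a / (2 * √s₀) + b / 2) * μ.real (A n)
        ≤ (a / (2 * √s₀) + b / 2) * μ.real Set.univ :=
      mul_le_mul_of_nonneg_left (measureReal_mono (Set.subset_univ _)) (by positivity)
    push_cast
    linarith

lemma tendsto_measure_inter_setOf_forall_le_add {F : ℕ → Ω → ℝ} (hF : ∀ ω, Monotone (F · ω))
    {B : Set Ω} (hB : ∀ ω ∈ B, BddAbove (Set.range (F · ω))) {ε : ℝ} (hε : 0 < ε) :
    Tendsto (fun N => μ (B ∩ {ω | ∀ n, F n ω ≤ F N ω + ε})) atTop (𝓝 (μ B)) := by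
  have hmono : Monotone fun N => B ∩ {ω | ∀ n, F n ω ≤ F N ω + ε} :=
    fun N N' hNN' ω hω => ⟨hω.1, fun n => (hω.2 n).trans (by linarith [hF ω hNN'])⟩
  have hunion : ⋃ N, B ∩ {ω | ∀ n, F n ω ≤ F N ω + ε} = B := by
    refine Set.Subset.antisymm (Set.iUnion_subset fun N => Set.inter_subset_left) fun ω hω => ?_
    obtain ⟨N, hN⟩ := exists_lt_of_lt_ciSup (sub_lt_self (⨆ n, F n ω) hε)
    exact Set.mem_iUnion.mpr ⟨N, hω, fun n => by linarith [le_ciSup (hB ω hω) n]⟩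
  have := tendsto_measure_iUnion_atTop (μ := μ) hmono
  rwa [hunion] at this

lemma mul_measureReal_le_setIntegral_of_partialSumInv_le [IsFiniteMeasure μ] {r : ℕ → Ω → ℝ}
    (hr_pos : ∀ n ω, 0 < r n ω) (hr_mono : ∀ ω, Monotone (r · ω)) {N n : ℕ} (hNn : N ≤ n)
    (hr_int : Integrable (r n) μ) {C : Set Ω} (hC : MeasurableSet C) {ε : ℝ} (hε : 0 < ε)
    (htail : ∀ ω ∈ C, partialSumInv (r · ω) n ≤ partialSumInv (r · ω) N + ε) :
    (n - N) / ε * μ.real C ≤ ∫ ω in C, r n ω ∂μ := by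
  refine setIntegral_ge_of_const_le_real hC (measure_ne_top μ _) (fun ω hω => ?_)
    hr_int.integrableOn
  rw [div_le_iff₀' hε]
  have := sub_le_partialSumInv_sub_mul (hr_pos · ω) (hr_mono ω) hNn
  nlinarith [htail ω hω, hr_pos n ω]

lemma measure_eq_zero_of_setIntegral_le_linear [IsFiniteMeasure μ] {r : ℕ → Ω → ℝ}
    (hr_meas : ∀ n, Measurable (r n)) (hr_int : ∀ n, Integrable (r n) μ)
    (hr_pos : ∀ n ω, 0 < r n ω) (hr_mono : ∀ ω, Monotone (r · ω)) {B : Set Ω}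
    (hB : MeasurableSet B) (hB_bdd : ∀ ω ∈ B, BddAbove (Set.range (partialSumInv (r · ω))))
    {a K : ℝ} (hint : ∀ n : ℕ, ∫ ω in B, r n ω ∂μ ≤ a + n * K) : μ B = 0 := by
  by_contra hB0
  have hp : 0 < μ.real B := ENNReal.toReal_pos hB0 (measure_ne_top μ B)
  set ε := μ.real B / (4 * (|K| + 1))
  have hε : 0 < ε := by positivity
  set T : ℕ → Ω → ℝ := fun n ω => partialSumInv (r · ω) n
  set C : ℕ → Set Ω := fun N => B ∩ {ω | ∀ n, T n ω ≤ T N ω + ε}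
  obtain ⟨N, hN⟩ : ∃ N, μ.real B / 2 < μ.real (C N) :=
    ((ENNReal.tendsto_toReal (measure_ne_top μ B)).comp
      (tendsto_measure_inter_setOf_forall_le_add
        (fun ω => partialSumInv_mono fun n => (hr_pos n ω).le) hB_bdd hε)).eventually
      (lt_mem_nhds (half_lt_self hp)) |>.exists
  have hT_meas (n : ℕ) : Measurable (T n) :=
    Finset.measurable_sum _ fun k _ => (hr_meas (k + 1)).inv
  have hC_meas : MeasurableSet (C N) := hB.inter <| by
    simp only [Set.ofPred_forall]
    exact MeasurableSet.iInter fun n => measurableSet_le (hT_meas n) ((hT_meas N).add_const ε)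
  have hlin (n : ℕ) (hNn : N ≤ n) : 2 * (|K| + 1) * (n - N) ≤ a + n * K := by
    have : (N : ℝ) ≤ n := by exact_mod_cast hNn
    calc 2 * (|K| + 1) * (n - N) = (n - N) / ε * (μ.real B / 2) := by
          simp only [ε]; field_simp; ring
      _ ≤ (n - N) / ε * μ.real (C N) := by gcongr
      _ ≤ ∫ ω in C N, r n ω ∂μ :=
          mul_measureReal_le_setIntegral_of_partialSumInv_le hr_pos hr_mono hNn (hr_int n)
            hC_meas hε fun ω hω => hω.2 n
      _ ≤ ∫ ω in B, r n ω ∂μ :=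
          setIntegral_mono_set (hr_int n).integrableOn
            (ae_of_all _ fun ω => (hr_pos n ω).le) Set.inter_subset_left.eventuallyLE
      _ ≤ a + n * K := hint n
  obtain ⟨n, hn⟩ := exists_nat_gt (|a| + 2 * (|K| + 1) * N)
  have := hlin (max n N) (le_max_right _ _)
  have hmax : (n : ℝ) ≤ max n N := by exact_mod_cast le_max_left n N
  nlinarith [le_abs_self a, le_abs_self K, abs_nonneg K]

lemma adapted_of_succ_eq_add {ℱ : Filtration ℕ m0} {S X : ℕ → Ω → ℝ}
    (h0 : Measurable[ℱ 0] (S 0)) (hX : ∀ n, Measurable[ℱ (n + 1)] (X (n + 1)))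
    (hS : ∀ n, S (n + 1) = S n + X (n + 1)) : Adapted ℱ S := by
  intro n
  induction n with
  | zero => exact h0
  | succ n ih => rw [hS n]; exact (ih.mono (ℱ.mono n.le_succ) le_rfl).add (hX n)

lemma integrable_of_succ_eq_add {S X : ℕ → Ω → ℝ} (h0 : Integrable (S 0) μ)
    (hX : ∀ n, Integrable (X (n + 1)) μ) (hS : ∀ n, S (n + 1) = S n + X (n + 1)) (n : ℕ) :
    Integrable (S n) μ := by
  induction n with
  | zero => exact h0
  | succ n ih => rw [hS n]; exact ih.add (hX n)

lemma MeasureTheory.Adapted.partialSumInv {ℱ : Filtration ℕ m0} {r : ℕ → Ω → ℝ}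
    (hr : Adapted ℱ r) : Adapted ℱ fun n ω => partialSumInv (r · ω) n := fun _ =>
  Finset.measurable_sum _ fun k hk => ((hr (k + 1)).mono (ℱ.mono (mem_range.mp hk)) le_rfl).inv

lemma adagrad_condExp_sub_le_of_partialSumInv_le {E F : Type*} [NormedAddCommGroup E]
    [NormedSpace ℝ E] [SeminormedAddCommGroup F] {m : MeasurableSpace Ω} {f : E → F}
    {L α₀ σ₀ σ₁ : ℝ} (hf : ∀ x y, ‖f x - f y‖ ≤ L * ‖x - y‖) (hα₀ : 0 ≤ α₀) (hσ₀ : 0 ≤ σ₀)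
    {θ₁ : E} {G θ : ℕ → Ω → E} {S : ℕ → Ω → ℝ} (hS_pos : ∀ n ω, 0 < S n ω)
    (hθ_init : ∀ ω, θ 1 ω = θ₁) (hS_succ : ∀ n ω, S (n + 1) ω = S n ω + ‖G (n + 1) ω‖ ^ 2)
    (hθ_succ : ∀ n ω, θ (n + 2) ω = θ (n + 1) ω - (α₀ / √(S (n + 1) ω)) • G (n + 1) ω) {n : ℕ}
    (hG_var : ∀ᵐ ω ∂μ,
      μ[fun ω => ‖G (n + 1) ω‖ ^ 2 | m] ω ≤ σ₀ * ‖f (θ (n + 1) ω)‖ ^ 2 + σ₁) (M : ℝ) :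
    ∀ᵐ ω ∂μ, partialSumInv (fun k => √(S k ω)) n ≤ M → μ[S (n + 1) - S n | m] ω
      ≤ (σ₀ * (2 * ‖f θ₁‖ ^ 2) + σ₁) + σ₀ * (4 * L ^ 2 * α₀ ^ 2 * M) * √(S n ω) := by
  have hincr : S (n + 1) - S n = fun ω => ‖G (n + 1) ω‖ ^ 2 := by
    ext ω; rw [Pi.sub_apply, hS_succ]; ring
  rw [hincr]
  filter_upwards [hG_var] with ω hω hT
  have hgrad := adagrad_norm_sq_le (G := (G · ω)) (θ := (θ · ω)) hf hα₀ (hS_pos · ω)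
    (hS_succ · ω) (hθ_succ · ω) n
  rw [hθ_init] at hgrad
  have hgradM : ‖f (θ (n + 1) ω)‖ ^ 2 ≤ 2 * ‖f θ₁‖ ^ 2 + 4 * L ^ 2 * α₀ ^ 2 * M * √(S n ω) :=
    hgrad.trans (by gcongr)
  nlinarith [mul_le_mul_of_nonneg_left hgradM hσ₀]

theorem adagrad_measure_partialSumInv_le_eq_zero [IsFiniteMeasure μ] {ℱ : Filtration ℕ m0}
    {E F : Type*} [NormedAddCommGroup E] [NormedSpace ℝ E] [SeminormedAddCommGroup F]
    {f : E → F} {L α₀ σ₀ σ₁ S₀ : ℝ} (hf : ∀ x y, ‖f x - f y‖ ≤ L * ‖x - y‖) (hα₀ : 0 ≤ α₀)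
    (hσ₀ : 0 ≤ σ₀) (hσ₁ : 0 ≤ σ₁) (hS₀ : 0 < S₀) {θ₁ : E} {G θ : ℕ → Ω → E}
    {S : ℕ → Ω → ℝ} (hG_meas : ∀ n, StronglyMeasurable[ℱ (n + 1)] (G (n + 1)))
    (hG_sq_int : ∀ n, Integrable (fun ω => ‖G (n + 1) ω‖ ^ 2) μ)
    (hθ_init : ∀ ω, θ 1 ω = θ₁) (hS_init : ∀ ω, S 0 ω = S₀)
    (hS_succ : ∀ n ω, S (n + 1) ω = S n ω + ‖G (n + 1) ω‖ ^ 2)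
    (hθ_succ : ∀ n ω, θ (n + 2) ω = θ (n + 1) ω - (α₀ / √(S (n + 1) ω)) • G (n + 1) ω)
    (hG_var : ∀ n, ∀ᵐ ω ∂μ,
      μ[fun ω => ‖G (n + 1) ω‖ ^ 2 | ℱ n] ω ≤ σ₀ * ‖f (θ (n + 1) ω)‖ ^ 2 + σ₁)
    {M : ℝ} (hM : 0 ≤ M) :
    μ {ω | ∀ n, partialSumInv (fun k => √(S k ω)) n ≤ M} = 0 := by
  have hS_mono (ω : Ω) : Monotone (S · ω) := monotone_nat_of_le_succ fun n => by
    rw [hS_succ]; exact le_add_of_nonneg_right (sq_nonneg _)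
  have hS_ge (n : ℕ) (ω : Ω) : S₀ ≤ S n ω := hS_init ω ▸ hS_mono ω n.zero_le
  have hS_pos (n : ℕ) (ω : Ω) : 0 < S n ω := hS₀.trans_le (hS_ge n ω)
  have hS_fun (n : ℕ) : S (n + 1) = S n + fun ω => ‖G (n + 1) ω‖ ^ 2 := funext (hS_succ n)
  have hS_const : S 0 = fun _ => S₀ := funext hS_init
  have hS_adapted : Adapted ℱ S := adapted_of_succ_eq_add (X := fun n ω => ‖G n ω‖ ^ 2)
    (hS_const ▸ measurable_const) (fun n => (hG_meas n).norm.measurable.pow_const 2) hS_fun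
  have hS_int := integrable_of_succ_eq_add (X := fun n ω => ‖G n ω‖ ^ 2)
    (hS_const ▸ integrable_const S₀) hG_sq_int hS_fun
  have hsqrt_adapted : Adapted ℱ fun n ω => √(S n ω) := fun n => (hS_adapted n).sqrt
  set A : ℕ → Set Ω := fun n => {ω | partialSumInv (fun k => √(S k ω)) n ≤ M}
  have hA_meas (n : ℕ) : MeasurableSet[ℱ n] (A n) :=
    measurableSet_le (hsqrt_adapted.partialSumInv n) measurable_const
  have hA_anti : Antitone A := fun m n hmn ω hω =>
    (partialSumInv_mono (fun k => Real.sqrt_nonneg _) hmn).trans hω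
  have hcond (n : ℕ) := adagrad_condExp_sub_le_of_partialSumInv_le hf hα₀ hσ₀ hS_pos hθ_init
    hS_succ hθ_succ (hG_var n) M
  have hlin := setIntegral_sqrt_le_of_condExp_sub_le hS_adapted hS_int hS₀ hS_ge hA_meas hA_anti
    (by positivity) (by positivity) hcond
  refine measure_eq_zero_of_setIntegral_le_linear (r := fun n ω => √(S n ω))
    (fun n => (hsqrt_adapted n).mono (ℱ.le n) le_rfl) (fun n => (hS_int n).sqrt)
    (fun n ω => Real.sqrt_pos.mpr (hS_pos n ω)) (fun ω m n h => Real.sqrt_le_sqrt (hS_mono ω h))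
    ?_ (fun ω hω => ⟨M, Set.forall_mem_range.mpr hω⟩) fun n =>
      (setIntegral_mono_set (hS_int n).sqrt.integrableOn (ae_of_all _ fun ω => Real.sqrt_nonneg _)
        (Eventually.of_forall fun ω hω => hω n)).trans (hlin n)
  rw [Set.ofPred_forall]
  exact MeasurableSet.iInter fun n => ℱ.le n _ (hA_meas n)

end Measure

theorem adagrad_norm_stepsize_series_diverges_general
    {d : ℕ} {Ω : Type*} {m0 : MeasurableSpace Ω} (P : Measure Ω) [IsProbabilityMeasure P]
    (ℱ : Filtration ℕ m0)
    (g : EuclideanSpace ℝ (Fin d) → ℝ)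
    (L σ₀ σ₁ α₀ S₀ : ℝ)
    (hσ₀ : 0 ≤ σ₀) (hσ₁ : 0 ≤ σ₁) (hα₀ : 0 < α₀) (hS₀ : 0 < S₀)
    (hg_smooth : ∀ x y, ‖gradient g x - gradient g y‖ ≤ L * ‖x - y‖)
    (θ₁ : EuclideanSpace ℝ (Fin d))
    (G θ : ℕ → Ω → EuclideanSpace ℝ (Fin d))
    (S : ℕ → Ω → ℝ)
    (hG_meas : ∀ n, 1 ≤ n → StronglyMeasurable[ℱ n] (G n))
    (hG_sq_int : ∀ n, 1 ≤ n → Integrable (fun ω => ‖G n ω‖ ^ 2) P)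
    (hθ_init : ∀ ω, θ 1 ω = θ₁)
    (hS_init : ∀ ω, S 0 ω = S₀)
    (hS_rec : ∀ n, 1 ≤ n → ∀ ω, S n ω = S (n - 1) ω + ‖G n ω‖ ^ 2)
    (hθ_rec : ∀ n, 1 ≤ n → ∀ ω,
      θ (n + 1) ω = θ n ω - (α₀ / Real.sqrt (S n ω)) • G n ω)
    (hG_var : ∀ n, 1 ≤ n → ∀ᵐ ω ∂P,
      (P[fun ω => ‖G n ω‖ ^ 2 | ℱ (n - 1)]) ω ≤ σ₀ * ‖gradient g (θ n ω)‖ ^ 2 + σ₁) :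
    ∀ᵐ ω ∂P,
      Tendsto (fun N : ℕ => ∑ n ∈ Finset.range N, α₀ / Real.sqrt (S (n + 1) ω))
        atTop atTop := by
  have hnull (M : ℕ) : P {ω | ∀ n, partialSumInv (fun k => √(S k ω)) n ≤ M} = 0 :=
    adagrad_measure_partialSumInv_le_eq_zero hg_smooth hα₀.le hσ₀ hσ₁ hS₀
      (fun n => hG_meas (n + 1) n.succ_pos) (fun n => hG_sq_int (n + 1) n.succ_pos) hθ_init
      hS_init (fun n => hS_rec (n + 1) n.succ_pos) (fun n => hθ_rec (n + 1) n.succ_pos)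
      (fun n => hG_var (n + 1) n.succ_pos) M.cast_nonneg
  have hae : ∀ᵐ ω ∂P, ∀ M : ℕ, ¬∀ n, partialSumInv (fun k => √(S k ω)) n ≤ M :=
    ae_all_iff.mpr fun M => measure_eq_zero_iff_ae_notMem.mp (hnull M)
  filter_upwards [hae] with ω hω
  have hunbdd : ¬BddAbove (Set.range (partialSumInv fun k => √(S k ω))) := by
    rintro ⟨b, hb⟩
    obtain ⟨M, hM⟩ := exists_nat_ge b
    exact hω M fun n => (hb ⟨n, rfl⟩).trans hM
  simpa only [partialSumInv, div_eq_mul_inv, mul_sum] using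
    (tendsto_atTop_atTop_of_monotone' (partialSumInv_mono fun _ => Real.sqrt_nonneg _)
      hunbdd).const_mul_atTop hα₀

/-- Lemma 5.3: the AdaGrad-Norm step-size series diverges almost surely:
`∑_{n=1}^∞ α₀/√S_n = +∞` a.s. -/
theorem adagrad_norm_stepsize_series_diverges
    {d : ℕ} {Ω : Type*} {m0 : MeasurableSpace Ω} (P : Measure Ω) [IsProbabilityMeasure P]
    (ℱ : Filtration ℕ m0)
    (g : EuclideanSpace ℝ (Fin d) → ℝ)
    (L σ₀ σ₁ α₀ S₀ δt : ℝ)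
    (hL : 0 < L) (hσ₀ : 0 ≤ σ₀) (hσ₁ : 0 ≤ σ₁) (hα₀ : 0 < α₀) (hS₀ : 0 < S₀)
    (hg_diff : ContDiff ℝ 1 g)
    (hg_nonneg : ∀ x, 0 ≤ g x)
    (hg_smooth : ∀ x y, ‖gradient g x - gradient g y‖ ≤ L * ‖x - y‖)
    (hδt : 0 < δt)
    (hflat : ∀ᶠ x in Bornology.cobounded (EuclideanSpace ℝ (Fin d)),
      δt < ‖gradient g x‖)
    (θ₁ : EuclideanSpace ℝ (Fin d))
    (G θ : ℕ → Ω → EuclideanSpace ℝ (Fin d))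
    (S : ℕ → Ω → ℝ)
    (hG_meas : ∀ n, 1 ≤ n → StronglyMeasurable[ℱ n] (G n))
    (hG_int : ∀ n, 1 ≤ n → Integrable (G n) P)
    (hG_sq_int : ∀ n, 1 ≤ n → Integrable (fun ω => ‖G n ω‖ ^ 2) P)
    (hθ_adapted : ∀ n, 1 ≤ n → StronglyMeasurable[ℱ (n - 1)] (θ n))
    (hθ_init : ∀ ω, θ 1 ω = θ₁)
    (hS_init : ∀ ω, S 0 ω = S₀)
    (hS_rec : ∀ n, 1 ≤ n → ∀ ω, S n ω = S (n - 1) ω + ‖G n ω‖ ^ 2)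
    (hθ_rec : ∀ n, 1 ≤ n → ∀ ω,
      θ (n + 1) ω = θ n ω - (α₀ / Real.sqrt (S n ω)) • G n ω)
    (hG_unbiased : ∀ n, 1 ≤ n →
      P[G n | ℱ (n - 1)] =ᵐ[P] fun ω => gradient g (θ n ω))
    (hG_var : ∀ n, 1 ≤ n → ∀ᵐ ω ∂P,
      (P[fun ω => ‖G n ω‖ ^ 2 | ℱ (n - 1)]) ω ≤ σ₀ * ‖gradient g (θ n ω)‖ ^ 2 + σ₁) :
    ∀ᵐ ω ∂P,
      Tendsto (fun N : ℕ => ∑ n ∈ Finset.range N, α₀ / Real.sqrt (S (n + 1) ω))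
        atTop atTop :=
  adagrad_norm_stepsize_series_diverges_general P ℱ g L σ₀ σ₁ α₀ S₀ hσ₀ hσ₁ hα₀ hS₀ hg_smooth θ₁ G θ
    S hG_meas hG_sq_int hθ_init hS_init hS_rec hθ_rec hG_var
end

section
/- Polynomial growth bound for RMSProp gradient accumulation: there exists a nonnegative random variable ω with E[ω] < +∞ (and in particular ω < +∞ almost surely) such that almost surely, for every T ≥ 1, √(S_T) ≤ (T+1)⁴·ω, where S_T := v·d + ∑_{n=1}^T ‖G_n‖². -/
/-!
Coordinatewise the RMSProp average satisfies `V_n ≥ (1 - β₁) G_n² / n`, so every coordinate of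
every step `θ_{n+1} - θ_n` is at most `1 / √(1 - β₁)`. Hence `θ_n` drifts at most linearly away
from `θ₁`, `L`-smoothness gives `‖∇g(θ_n)‖ ≤ K n`, and the affine variance bound gives
`E‖G_n‖² ≤ C n²`. Therefore `F := ∑ₙ ‖G_n‖² / n⁴` has finite expectation, and
`∑_{n ≤ T} ‖G_n‖² ≤ T⁴ F` for every `T`.
-/

open MeasureTheory Filter

lemma EuclideanSpace.sq_apply_le_norm_sq {ι : Type*} [Fintype ι] (x : EuclideanSpace ℝ ι)
    (i : ι) : x i ^ 2 ≤ ‖x‖ ^ 2 := by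
  rw [← sq_abs, ← Real.norm_eq_abs]
  exact pow_le_pow_left₀ (norm_nonneg _) (PiLp.norm_apply_le x i) 2

lemma EuclideanSpace.norm_le_sqrt_card_mul {ι : Type*} [Fintype ι] {x : EuclideanSpace ℝ ι}
    {c : ℝ} (hc : 0 ≤ c) (h : ∀ i, |x i| ≤ c) : ‖x‖ ≤ √(Fintype.card ι) * c := by
  rw [← Real.sqrt_sq hc, ← Real.sqrt_mul (Nat.cast_nonneg _),
    Real.le_sqrt (norm_nonneg _) (by positivity), EuclideanSpace.real_norm_sq_eq]
  calc ∑ i, x i ^ 2 ≤ ∑ _i : ι, c ^ 2 :=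
        Finset.sum_le_sum fun i _ => by rw [← sq_abs]; gcongr; exact h i
    _ = Fintype.card ι * c ^ 2 := by simp

lemma norm_sub_le_of_norm_succ_sub_le {E : Type*} [SeminormedAddCommGroup E] {x : ℕ → E}
    {c : ℝ} (h : ∀ n, 1 ≤ n → ‖x (n + 1) - x n‖ ≤ c) {n : ℕ} (hn : 1 ≤ n) :
    ‖x n - x 1‖ ≤ (n - 1) * c := by
  induction n, hn using Nat.le_induction with
  | base => simp
  | succ n hn ih =>
    calc ‖x (n + 1) - x 1‖ ≤ ‖x (n + 1) - x n‖ + ‖x n - x 1‖ :=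
          norm_sub_le_norm_sub_add_norm_sub _ _ _
      _ ≤ c + (n - 1) * c := add_le_add (h n hn) ih
      _ = ((n + 1 : ℕ) - 1) * c := by push_cast; ring

lemma norm_apply_le_mul_of_norm_succ_sub_le {E F : Type*} [SeminormedAddCommGroup E]
    [SeminormedAddCommGroup F] {f : E → F} {x : ℕ → E} {L c : ℝ} (hL : 0 ≤ L) (hc : 0 ≤ c)
    (hf : ∀ y z, ‖f y - f z‖ ≤ L * ‖y - z‖) (hx : ∀ n, 1 ≤ n → ‖x (n + 1) - x n‖ ≤ c)
    {n : ℕ} (hn : 1 ≤ n) : ‖f (x n)‖ ≤ (‖f (x 1)‖ + L * c) * n := by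
  have hn' : (1 : ℝ) ≤ n := by exact_mod_cast hn
  have hdrift := norm_sub_le_of_norm_succ_sub_le hx hn
  calc ‖f (x n)‖ ≤ ‖f (x 1)‖ + ‖f (x n) - f (x 1)‖ := norm_le_insert' _ _
    _ ≤ ‖f (x 1)‖ + L * ((n - 1) * c) := by gcongr; exact (hf _ _).trans (by gcongr)
    _ ≤ (‖f (x 1)‖ + L * c) * n := by nlinarith [norm_nonneg (f (x 1)), mul_nonneg hL hc]

section Average

variable {β v : ℝ} {u x : ℕ → ℝ}

lemma rmsprop_average_nonneg (hβ₀ : 0 ≤ β) (hβ₁ : β ≤ 1) (hv : 0 ≤ v)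
    (h₁ : u 1 = β * v + (1 - β) * x 1 ^ 2)
    (hrec : ∀ n : ℕ, 2 ≤ n → u n = (1 - 1 / (n : ℝ)) * u (n - 1) + 1 / (n : ℝ) * x n ^ 2)
    {n : ℕ} (hn : 1 ≤ n) : 0 ≤ u n := by
  induction n, hn using Nat.le_induction with
  | base => rw [h₁]; have := sub_nonneg.2 hβ₁; positivity
  | succ n hn ih =>
    rw [hrec (n + 1) (by omega), Nat.add_sub_cancel]
    have : 1 / ((n + 1 : ℕ) : ℝ) ≤ 1 := by rw [div_le_one (by positivity)]; norm_cast; omega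
    have := sub_nonneg.2 this
    positivity

lemma rmsprop_mul_sq_div_le_average (hβ₀ : 0 ≤ β) (hβ₁ : β ≤ 1) (hv : 0 ≤ v)
    (h₁ : u 1 = β * v + (1 - β) * x 1 ^ 2)
    (hrec : ∀ n : ℕ, 2 ≤ n → u n = (1 - 1 / (n : ℝ)) * u (n - 1) + 1 / (n : ℝ) * x n ^ 2)
    {n : ℕ} (hn : 1 ≤ n) : (1 - β) * x n ^ 2 / n ≤ u n := by
  obtain rfl | hn₂ := hn.eq_or_lt
  · rw [h₁]; simp only [Nat.cast_one, div_one]; nlinarith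
  · have hn₀ : (0 : ℝ) < n := by positivity
    have hprev := rmsprop_average_nonneg hβ₀ hβ₁ hv h₁ hrec (n := n - 1) (by omega)
    have : 1 / (n : ℝ) ≤ 1 := by rw [div_le_one hn₀]; exact_mod_cast hn
    rw [hrec n hn₂]
    calc (1 - β) * x n ^ 2 / n ≤ x n ^ 2 / n := by gcongr; nlinarith [sq_nonneg (x n)]
      _ = 1 / (n : ℝ) * x n ^ 2 := by ring
      _ ≤ _ := by nlinarith [mul_nonneg (sub_nonneg.2 this) hprev]

end Average

lemma div_sqrt_add_mul_abs_le {n w x κ ε : ℝ} (hn : 0 < n) (hκ : 0 < κ) (hε : 0 ≤ ε)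
    (h : κ * x ^ 2 / n ≤ w) : 1 / √n / (√w + ε) * |x| ≤ 1 / √κ := by
  have hsqrt : √κ * |x| / √n ≤ √w := by
    rw [← Real.sqrt_sq_eq_abs, ← Real.sqrt_mul hκ.le, ← Real.sqrt_div' _ hn.le]
    exact Real.sqrt_le_sqrt h
  have hx : |x| ≤ 1 / √κ * (√n * (√w + ε)) := by
    rw [div_le_iff₀ (by positivity)] at hsqrt
    rw [one_div_mul_eq_div, le_div_iff₀' (by positivity)]
    nlinarith [Real.sqrt_nonneg n]
  rw [div_div, one_div_mul_eq_div]
  exact div_le_of_le_mul₀ (by positivity) (by positivity) hx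

lemma rmsprop_norm_step_le {d : ℕ} {β₁ v ε : ℝ} (hβ₀ : 0 ≤ β₁) (hβ₁ : β₁ < 1) (hv : 0 ≤ v)
    (hε : 0 ≤ ε) {G θ : ℕ → EuclideanSpace ℝ (Fin d)} {V : ℕ → Fin d → ℝ}
    (hV1 : ∀ i, V 1 i = β₁ * v + (1 - β₁) * G 1 i ^ 2)
    (hV_rec : ∀ n : ℕ, 2 ≤ n → ∀ i,
      V n i = (1 - 1 / (n : ℝ)) * V (n - 1) i + (1 / (n : ℝ)) * G n i ^ 2)
    (hθ_rec : ∀ n : ℕ, 1 ≤ n → ∀ i : Fin d,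
      θ (n + 1) i = θ n i - (1 / √(n : ℝ)) / (√(V n i) + ε) * G n i)
    {n : ℕ} (hn : 1 ≤ n) : ‖θ (n + 1) - θ n‖ ≤ √d * (1 / √(1 - β₁)) := by
  have hκ : 0 < 1 - β₁ := sub_pos.2 hβ₁
  have hstep : ∀ i, |(θ (n + 1) - θ n) i| ≤ 1 / √(1 - β₁) := fun i => by
    have hV := rmsprop_mul_sq_div_le_average (u := fun n => V n i) (x := fun n => G n i)
      hβ₀ hβ₁.le hv (hV1 i) (fun n hn => hV_rec n hn i) hn
    rw [PiLp.sub_apply, hθ_rec n hn i, sub_sub_cancel_left, abs_neg, abs_mul,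
      abs_of_nonneg (by positivity)]
    exact div_sqrt_add_mul_abs_le (by positivity) hκ hε hV
  simpa using EuclideanSpace.norm_le_sqrt_card_mul (by positivity) hstep

lemma sqrt_add_le_of_le_pow_mul {a S F : ℝ} {T : ℕ} (ha : 0 ≤ a) (hF : 0 ≤ F)
    (hS : S ≤ (T : ℝ) ^ 4 * F) : √(a + S) ≤ ((T : ℝ) + 1) ^ 4 * (1 + a + F) := by
  have hT : (T : ℝ) ^ 4 * F ≤ ((T : ℝ) + 1) ^ 4 * F := by gcongr; linarith
  have hA : 1 ≤ ((T : ℝ) + 1) ^ 4 := one_le_pow₀ (by linarith [T.cast_nonneg (α := ℝ)])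
  have hAW : 1 ≤ ((T : ℝ) + 1) ^ 4 * (1 + a + F) :=
    one_le_mul_of_one_le_of_one_le hA (by linarith)
  calc √(a + S) ≤ √(((T : ℝ) + 1) ^ 4 * (1 + a + F)) := Real.sqrt_le_sqrt (by nlinarith)
    _ ≤ ((T : ℝ) + 1) ^ 4 * (1 + a + F) := Real.sqrt_le_self_iff.2 (.inr hAW)

section Probability

variable {Ω : Type*} {m m0 : MeasurableSpace Ω} {P : Measure Ω}

lemma integral_le_of_ae_condExp_le [IsProbabilityMeasure P] (hm : m ≤ m0) {f : Ω → ℝ} {b : ℝ}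
    (h : ∀ᵐ ω ∂P, P[f | m] ω ≤ b) : ∫ ω, f ω ∂P ≤ b := by
  rw [← integral_condExp hm]
  simpa using integral_mono_ae integrable_condExp (integrable_const b) h

lemma integral_norm_sq_le_of_condExp_sq_le {ι : Type*} [Fintype ι] [IsProbabilityMeasure P]
    (hm : m ≤ m0)
    {Y : Ω → EuclideanSpace ℝ ι} (hY : AEStronglyMeasurable Y P)
    (hY_sq : Integrable (fun ω => ‖Y ω‖ ^ 2) P) {b : ℝ}
    (hb : ∀ i, ∀ᵐ ω ∂P, P[fun ω => Y ω i ^ 2 | m] ω ≤ b) :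
    ∫ ω, ‖Y ω‖ ^ 2 ∂P ≤ Fintype.card ι * b := by
  have hcoord : ∀ i, Integrable (fun ω => Y ω i ^ 2) P := fun i =>
    hY_sq.mono (((EuclideanSpace.proj i).continuous.comp_aestronglyMeasurable hY).pow 2)
      (ae_of_all _ fun ω => by
        simpa [abs_of_nonneg] using EuclideanSpace.sq_apply_le_norm_sq (Y ω) i)
  simp_rw [EuclideanSpace.real_norm_sq_eq]
  rw [integral_finsetSum _ fun i _ => hcoord i]
  refine (Finset.sum_le_sum fun i _ => integral_le_of_ae_condExp_le hm (hb i)).trans ?_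
  simp

lemma integral_norm_sq_le_of_condExp_sq_le_affine {ι : Type*} [Fintype ι]
    [IsProbabilityMeasure P] (hm : m ≤ m0) {Y Z : Ω → EuclideanSpace ℝ ι}
    (hY : AEStronglyMeasurable Y P) (hY_sq : Integrable (fun ω => ‖Y ω‖ ^ 2) P)
    {σ₀ σ₁ R : ℝ} (hσ₀ : 0 ≤ σ₀) (hZ : ∀ ω, ‖Z ω‖ ≤ R)
    (hvar : ∀ i, ∀ᵐ ω ∂P, P[fun ω => Y ω i ^ 2 | m] ω ≤ σ₀ * Z ω i ^ 2 + σ₁) :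
    ∫ ω, ‖Y ω‖ ^ 2 ∂P ≤ Fintype.card ι * (σ₀ * R ^ 2 + σ₁) :=
  integral_norm_sq_le_of_condExp_sq_le hm hY hY_sq fun i => by
    filter_upwards [hvar i] with ω hω
    have := (EuclideanSpace.sq_apply_le_norm_sq (Z ω) i).trans
      (pow_le_pow_left₀ (norm_nonneg _) (hZ ω) 2)
    nlinarith

lemma exists_integrable_sum_range_le_of_summable_integral {X : ℕ → Ω → ℝ}
    (hX_nonneg : ∀ k ω, 0 ≤ X k ω) (hX_int : ∀ k, Integrable (X k) P)
    (hX_sum : Summable fun k => ∫ ω, X k ω ∂P) :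
    ∃ F : Ω → ℝ, (∀ ω, 0 ≤ F ω) ∧ Integrable F P ∧
      ∀ᵐ ω ∂P, ∀ T, ∑ k ∈ Finset.range T, X k ω ≤ F ω := by
  -- summed in `ℝ≥0∞`, so that `S` makes sense without pointwise summability
  set S : Ω → ENNReal := fun ω => ∑' k, ENNReal.ofReal (X k ω)
  have hS_meas : AEMeasurable S P :=
    AEMeasurable.tsum fun k => (hX_int k).aemeasurable.ennreal_ofReal
  have hS_lint : ∫⁻ ω, S ω ∂P ≠ ⊤ := by
    rw [lintegral_tsum fun k => (hX_int k).aemeasurable.ennreal_ofReal]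
    simp_rw [← ofReal_integral_eq_lintegral_ofReal (hX_int _) (ae_of_all _ (hX_nonneg _)),
      ← ENNReal.ofReal_tsum_of_nonneg (fun k => integral_nonneg (hX_nonneg k)) hX_sum]
    exact ENNReal.ofReal_ne_top
  refine ⟨fun ω => (S ω).toReal, fun ω => ENNReal.toReal_nonneg,
    integrable_toReal_of_lintegral_ne_top hS_meas hS_lint, ?_⟩
  filter_upwards [ae_lt_top' hS_meas hS_lint] with ω hω T
  rw [← ENNReal.toReal_ofReal (Finset.sum_nonneg fun k _ => hX_nonneg k ω),
    ENNReal.ofReal_sum_of_nonneg fun k _ => hX_nonneg k ω]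
  exact ENNReal.toReal_mono hω.ne (ENNReal.sum_le_tsum _)

lemma exists_integrable_sum_range_le_pow_mul {X : ℕ → Ω → ℝ}
    (hX_nonneg : ∀ k ω, 0 ≤ X k ω) (hX_int : ∀ k, Integrable (X k) P) {C : ℝ}
    (hX_moment : ∀ k : ℕ, ∫ ω, X k ω ∂P ≤ C * ((k : ℝ) + 1) ^ 2) :
    ∃ F : Ω → ℝ, (∀ ω, 0 ≤ F ω) ∧ Integrable F P ∧
      ∀ᵐ ω ∂P, ∀ T : ℕ, ∑ k ∈ Finset.range T, X k ω ≤ (T : ℝ) ^ 4 * F ω := by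
  have hsum : Summable fun k : ℕ => C / ((k : ℝ) + 1) ^ 2 := by
    refine (((summable_nat_add_iff 1).2
      (Real.summable_one_div_nat_pow.2 one_lt_two)).mul_left C).congr fun k => ?_
    push_cast; ring
  obtain ⟨F, hF_nonneg, hF_int, hF⟩ := exists_integrable_sum_range_le_of_summable_integral
    (X := fun k ω => X k ω / ((k : ℝ) + 1) ^ 4) (fun k ω => by have := hX_nonneg k ω; positivity)
    (fun k => (hX_int k).div_const _)
    (hsum.of_nonneg_of_le (fun k => integral_nonneg fun ω => by
        have := hX_nonneg k ω; positivity) fun k => by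
      rw [integral_div, div_le_div_iff₀ (by positivity) (by positivity)]
      nlinarith [hX_moment k, pow_pos (show (0 : ℝ) < k + 1 by positivity) 2])
  refine ⟨F, hF_nonneg, hF_int, ?_⟩
  filter_upwards [hF] with ω hω T
  calc ∑ k ∈ Finset.range T, X k ω
      ≤ ∑ k ∈ Finset.range T, (T : ℝ) ^ 4 * (X k ω / ((k : ℝ) + 1) ^ 4) := by
        refine Finset.sum_le_sum fun k hk => ?_
        have hkT : (k : ℝ) + 1 ≤ T := by exact_mod_cast Finset.mem_range.1 hk
        have := hX_nonneg k ω
        calc X k ω = ((k : ℝ) + 1) ^ 4 * (X k ω / ((k : ℝ) + 1) ^ 4) := by field_simp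
          _ ≤ (T : ℝ) ^ 4 * (X k ω / ((k : ℝ) + 1) ^ 4) := by gcongr
    _ ≤ (T : ℝ) ^ 4 * F ω := by rw [← Finset.mul_sum]; gcongr; exact hω T

end Probability

theorem rmsprop_polynomial_growth_general
    {d : ℕ} {Ω : Type*} {m0 : MeasurableSpace Ω} (P : Measure Ω) [IsProbabilityMeasure P]
    (ℱ : Filtration ℕ m0)
    (g : EuclideanSpace ℝ (Fin d) → ℝ)
    (L σ₀ σ₁ v ε β₁ : ℝ)
    (hL : 0 < L) (hσ₀ : 0 ≤ σ₀) (hσ₁ : 0 ≤ σ₁) (hv : 0 < v) (hε : 0 < ε)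
    (hβ₁ : β₁ ∈ Set.Ioo (0 : ℝ) 1)
    (hg_smooth : ∀ x y, ‖gradient g x - gradient g y‖ ≤ L * ‖x - y‖)
    (θ₁ : EuclideanSpace ℝ (Fin d))
    (G θ : ℕ → Ω → EuclideanSpace ℝ (Fin d))
    (V : ℕ → Ω → Fin d → ℝ)
    (hG_meas : ∀ n, 1 ≤ n → StronglyMeasurable[ℱ n] (G n))
    (hG_sq_int : ∀ n, 1 ≤ n → Integrable (fun ω => ‖G n ω‖ ^ 2) P)
    (hθ_init : ∀ ω, θ 1 ω = θ₁)
    (hV1 : ∀ ω i, V 1 ω i = β₁ * v + (1 - β₁) * G 1 ω i ^ 2)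
    (hV_rec : ∀ n : ℕ, 2 ≤ n → ∀ ω i,
      V n ω i = (1 - 1 / (n : ℝ)) * V (n - 1) ω i + (1 / (n : ℝ)) * G n ω i ^ 2)
    (hθ_rec : ∀ n : ℕ, 1 ≤ n → ∀ ω (i : Fin d),
      θ (n + 1) ω i = θ n ω i
        - (1 / Real.sqrt (n : ℝ)) / (Real.sqrt (V n ω i) + ε) * G n ω i)
    (hG_var : ∀ n, 1 ≤ n → ∀ i : Fin d, ∀ᵐ ω ∂P,
      (P[fun ω => G n ω i ^ 2 | ℱ (n - 1)]) ω
        ≤ σ₀ * gradient g (θ n ω) i ^ 2 + σ₁) :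
    ∃ W : Ω → ℝ,
      (∀ ω, 0 ≤ W ω) ∧ Integrable W P ∧
      ∀ᵐ ω ∂P, ∀ T : ℕ, 1 ≤ T →
        Real.sqrt (v * d + ∑ n ∈ Finset.Icc 1 T, ‖G n ω‖ ^ 2)
          ≤ ((T : ℝ) + 1) ^ 4 * W ω := by
  set c := √d * (1 / √(1 - β₁))
  set K := ‖gradient g θ₁‖ + L * c
  have hstep (ω : Ω) (n : ℕ) (hn : 1 ≤ n) : ‖θ (n + 1) ω - θ n ω‖ ≤ c :=
    rmsprop_norm_step_le (G := (G · ω)) (θ := (θ · ω)) (V := (V · ω)) hβ₁.1.le hβ₁.2 hv.le hε.le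
      (hV1 ω) (fun n hn => hV_rec n hn ω) (fun n hn => hθ_rec n hn ω) hn
  have hgrad (n : ℕ) (hn : 1 ≤ n) (ω : Ω) : ‖gradient g (θ n ω)‖ ≤ K * n := by
    simpa [hθ_init ω] using norm_apply_le_mul_of_norm_succ_sub_le (x := (θ · ω)) hL.le
      (by positivity) hg_smooth (hstep ω) hn
  have hmoment (k : ℕ) :
      ∫ ω, ‖G (k + 1) ω‖ ^ 2 ∂P ≤ d * (σ₀ * K ^ 2 + σ₁) * ((k : ℝ) + 1) ^ 2 := by
    have hk := Nat.le_add_left 1 k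
    have hk₁ : (1 : ℝ) ≤ ((k : ℝ) + 1) ^ 2 := one_le_pow₀ (by linarith [k.cast_nonneg (α := ℝ)])
    have := integral_norm_sq_le_of_condExp_sq_le_affine (ℱ.le _)
      ((hG_meas _ hk).mono (ℱ.le _)).aestronglyMeasurable (hG_sq_int _ hk) hσ₀ (hgrad _ hk)
      (hG_var _ hk)
    push_cast [Fintype.card_fin] at this
    nlinarith [mul_nonneg d.cast_nonneg hσ₁]
  obtain ⟨F, hF_nonneg, hF_int, hF⟩ := exists_integrable_sum_range_le_pow_mul
    (X := fun k ω => ‖G (k + 1) ω‖ ^ 2) (fun k ω => by positivity)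
    (fun k => hG_sq_int _ (by omega)) hmoment
  refine ⟨fun ω => 1 + v * d + F ω, fun ω => by have := hF_nonneg ω; positivity,
    (integrable_const _).add hF_int, ?_⟩
  filter_upwards [hF] with ω hω T _
  refine sqrt_add_le_of_le_pow_mul (by positivity) (hF_nonneg ω) ?_
  rw [← Finset.Ico_add_one_right_eq_Icc, ← zero_add 1, ← Finset.sum_Ico_add',
    ← Finset.range_eq_Ico]
  exact hω T

/-- Polynomial growth bound for RMSProp gradient accumulation (Lemma C.3):
there is a nonnegative integrable random variable `W` such that a.s. for every
`T ≥ 1`, `√(S_T) ≤ (T+1)⁴·W`, where `S_T = v·d + ∑_{n=1}^T ‖G_n‖²`. -/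
theorem rmsprop_polynomial_growth
    {d : ℕ} {Ω : Type*} {m0 : MeasurableSpace Ω} (P : Measure Ω) [IsProbabilityMeasure P]
    (ℱ : Filtration ℕ m0)
    (g : EuclideanSpace ℝ (Fin d) → ℝ)
    (L σ₀ σ₁ v ε β₁ : ℝ)
    (hL : 0 < L) (hσ₀ : 0 ≤ σ₀) (hσ₁ : 0 ≤ σ₁) (hv : 0 < v) (hε : 0 < ε)
    (hβ₁ : β₁ ∈ Set.Ioo (0 : ℝ) 1)
    (hg_diff : ContDiff ℝ 1 g)
    (hg_nonneg : ∀ x, 0 ≤ g x)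
    (hg_smooth : ∀ x y, ‖gradient g x - gradient g y‖ ≤ L * ‖x - y‖)
    (θ₁ : EuclideanSpace ℝ (Fin d))
    (G θ : ℕ → Ω → EuclideanSpace ℝ (Fin d))
    (V : ℕ → Ω → Fin d → ℝ)
    (hG_meas : ∀ n, 1 ≤ n → StronglyMeasurable[ℱ n] (G n))
    (hG_int : ∀ n, 1 ≤ n → Integrable (G n) P)
    (hG_sq_int : ∀ n, 1 ≤ n → Integrable (fun ω => ‖G n ω‖ ^ 2) P)
    (hθ_adapted : ∀ n, 1 ≤ n → StronglyMeasurable[ℱ (n - 1)] (θ n))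
    (hθ_init : ∀ ω, θ 1 ω = θ₁)
    (hV0 : ∀ ω i, V 0 ω i = v)
    (hV1 : ∀ ω i, V 1 ω i = β₁ * v + (1 - β₁) * G 1 ω i ^ 2)
    (hV_rec : ∀ n : ℕ, 2 ≤ n → ∀ ω i,
      V n ω i = (1 - 1 / (n : ℝ)) * V (n - 1) ω i + (1 / (n : ℝ)) * G n ω i ^ 2)
    (hθ_rec : ∀ n : ℕ, 1 ≤ n → ∀ ω (i : Fin d),
      θ (n + 1) ω i = θ n ω i
        - (1 / Real.sqrt (n : ℝ)) / (Real.sqrt (V n ω i) + ε) * G n ω i)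
    (hG_unbiased : ∀ n, 1 ≤ n →
      P[G n | ℱ (n - 1)] =ᵐ[P] fun ω => gradient g (θ n ω))
    (hG_var : ∀ n, 1 ≤ n → ∀ i : Fin d, ∀ᵐ ω ∂P,
      (P[fun ω => G n ω i ^ 2 | ℱ (n - 1)]) ω
        ≤ σ₀ * gradient g (θ n ω) i ^ 2 + σ₁) :
    ∃ W : Ω → ℝ,
      (∀ ω, 0 ≤ W ω) ∧ Integrable W P ∧
      ∀ᵐ ω ∂P, ∀ T : ℕ, 1 ≤ T →
        Real.sqrt (v * d + ∑ n ∈ Finset.Icc 1 T, ‖G n ω‖ ^ 2)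
          ≤ ((T : ℝ) + 1) ^ 4 * W ω :=
  rmsprop_polynomial_growth_general P ℱ g L σ₀ σ₁ v ε β₁ hL hσ₀ hσ₁ hv hε hβ₁ hg_smooth θ₁ G θ V
    hG_meas hG_sq_int hθ_init hV1 hV_rec hθ_rec hG_var
end
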